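/- arXiv:1710.08371 — 7 statements merged into one kernel-verified Lean document; each statement's English description precedes it below -/
import Mathlib

section
/- For every integer a ≥ 2, #{k ∈ ℕ : 1 ≤ k, 2k ≤ a, gcd(k,a) = 1} + #{(x,y,z) ∈ ℕ³ : x,y,z ≥ 1, x+y+z = a, gcd(x,y,z) = 1} = F(a), where F(a) = Σ_{d ∣ a} μ(a/d)·(⌊d/2⌋ + (d−1)(d−2)/2). -/
/-- Number of unordered bipartitions `a = k + (a-k)` with `1 ≤ k`, `2k ≤ a`
and `gcd(k,a) = 1`. -/
def bipartCount (a : ℕ) : ℕ :=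
  ((Finset.Icc 1 a).filter fun k => 2 * k ≤ a ∧ Nat.gcd k a = 1).card

/-- Number of ordered tripartitions `a = x + y + z` with `x, y, z ≥ 1`
and `gcd(x,y,z) = 1`. -/
def tripartCount (a : ℕ) : ℕ :=
  (((Finset.Icc 1 a) ×ˢ (Finset.Icc 1 a) ×ˢ (Finset.Icc 1 a)).filter
    fun v => v.1 + v.2.1 + v.2.2 = a ∧ Nat.gcd (Nat.gcd v.1 v.2.1) v.2.2 = 1).card

/-- `F a = Σ_{d ∣ a} μ(a/d)·(⌊d/2⌋ + (d−1)(d−2)/2)`. -/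
def F (a : ℕ) : ℤ :=
  ∑ d ∈ a.divisors, ArithmeticFunction.moebius (a / d) *
    (((d / 2 : ℕ) : ℤ) + (((d - 1) * (d - 2) / 2 : ℕ) : ℤ))

open Finset

/-!
Group the bipartitions `k + (n - k)` (with `2k ≤ n`) and the ordered tripartitions of `n` by the
gcd `c` of their parts: those with gcd `c` are exactly `c` times the primitive ones of `n / c`.
Hence the primitive counts of the divisors of `n` add up to the total counts
`⌊n/2⌋ + C(n - 1, 2) = ⌊n/2⌋ + (n - 1)(n - 2)/2`, and Möbius inversion gives `F`.
-/

lemma card_filter_two_mul_le (n : ℕ) : #{k ∈ Icc 1 n | 2 * k ≤ n} = n / 2 := by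
  have h : {k ∈ Icc 1 n | 2 * k ≤ n} = Icc 1 (n / 2) := by
    ext k
    simp only [mem_filter, mem_Icc]
    omega
  rw [h, Nat.card_Icc, Nat.add_sub_cancel]

lemma bipartCount_eq_card_gcd_eq {c d : ℕ} (hc : 0 < c) :
    bipartCount d = #{k ∈ Icc 1 (c * d) | 2 * k ≤ c * d ∧ k.gcd (c * d) = c} := by
  refine card_bij (fun k _ => c * k) ?_ (fun _ _ _ _ => Nat.eq_of_mul_eq_mul_left hc) ?_
  · intro k hk
    simp only [mem_filter, mem_Icc] at hk ⊢
    obtain ⟨⟨hk1, hkd⟩, h2k, hgcd⟩ := hk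
    refine ⟨⟨by nlinarith, by gcongr⟩, by nlinarith, ?_⟩
    rw [Nat.gcd_mul_left, hgcd, mul_one]
  · intro k hk
    simp only [mem_filter, mem_Icc] at hk ⊢
    obtain ⟨⟨hk1, hkn⟩, h2k, hgcd⟩ := hk
    obtain ⟨q, rfl⟩ : c ∣ k := hgcd ▸ Nat.gcd_dvd_left k (c * d)
    rw [Nat.gcd_mul_left, mul_eq_left₀ hc.ne'] at hgcd
    exact ⟨q, ⟨⟨by nlinarith, Nat.le_of_mul_le_mul_left hkn hc⟩,
      Nat.le_of_mul_le_mul_left (by linarith) hc, hgcd⟩, rfl⟩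

lemma sum_divisors_bipartCount (n : ℕ) : ∑ d ∈ n.divisors, bipartCount d = n / 2 := by
  rcases n.eq_zero_or_pos with rfl | hn
  · simp
  rw [← Nat.sum_div_divisors, ← card_filter_two_mul_le, card_eq_sum_card_fiberwise
    (f := fun k => k.gcd n) fun k _ => Nat.mem_divisors.2 ⟨Nat.gcd_dvd_right k n, hn.ne'⟩]
  refine sum_congr rfl fun c hc => ?_
  have hc0 := Nat.pos_of_mem_divisors hc
  obtain ⟨d, rfl⟩ := Nat.dvd_of_mem_divisors hc
  rw [Nat.mul_div_cancel_left _ hc0, bipartCount_eq_card_gcd_eq hc0, filter_filter]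

def tripleCompositions (n : ℕ) : Finset (ℕ × ℕ × ℕ) :=
  {v ∈ Icc 1 n ×ˢ Icc 1 n ×ˢ Icc 1 n | v.1 + v.2.1 + v.2.2 = n}

def tripleGcd (v : ℕ × ℕ × ℕ) : ℕ := (v.1.gcd v.2.1).gcd v.2.2

lemma mem_tripleCompositions {n x y z : ℕ} :
    (x, y, z) ∈ tripleCompositions n ↔ 0 < x ∧ 0 < y ∧ 0 < z ∧ x + y + z = n := by
  simp only [tripleCompositions, mem_filter, mem_product, mem_Icc]
  omega

lemma dvd_tripleGcd_iff {c x y z : ℕ} :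
    c ∣ tripleGcd (x, y, z) ↔ c ∣ x ∧ c ∣ y ∧ c ∣ z := by
  simp only [tripleGcd, Nat.dvd_gcd_iff, and_assoc]

lemma tripleGcd_mul (c x y z : ℕ) :
    tripleGcd (c * x, c * y, c * z) = c * tripleGcd (x, y, z) := by
  simp only [tripleGcd, Nat.gcd_mul_left]

lemma tripartCount_eq (d : ℕ) :
    tripartCount d = #{v ∈ tripleCompositions d | tripleGcd v = 1} := by
  rw [tripleCompositions, filter_filter]
  rfl

/-- Stars and bars: `(x, y, z) ↦ (x, x + y)` picks the two cut points in `{1, …, n - 1}`. -/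
lemma card_tripleCompositions (n : ℕ) : #(tripleCompositions n) = (n - 1).choose 2 :=
  calc #(tripleCompositions n) = #{p ∈ Ioo 0 n ×ˢ Ioo 0 n | p.1 < p.2} := by
        refine card_nbij' (fun v => (v.1, v.1 + v.2.1)) (fun p => (p.1, p.2 - p.1, n - p.2))
          ?_ ?_ ?_ ?_
        · rintro ⟨x, y, z⟩ hv
          simp only [mem_coe, mem_tripleCompositions, mem_filter, mem_product, mem_Ioo] at hv ⊢
          omega
        · rintro ⟨i, j⟩ hp
          simp only [mem_coe, mem_tripleCompositions, mem_filter, mem_product, mem_Ioo] at hp ⊢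
          omega
        · rintro ⟨x, y, z⟩ hv
          simp only [mem_coe, mem_tripleCompositions] at hv
          simp only [Prod.mk.injEq, true_and]
          omega
        · rintro ⟨i, j⟩ hp
          simp only [mem_coe, mem_filter, mem_product, mem_Ioo] at hp
          simp only [Prod.mk.injEq, true_and]
          omega
    _ = (n - 1).choose 2 := by rw [card_product_filter_lt, Nat.card_Ioo, Nat.sub_zero]

lemma tripartCount_eq_card_tripleGcd_eq {c d : ℕ} (hc : 0 < c) :
    tripartCount d = #{v ∈ tripleCompositions (c * d) | tripleGcd v = c} := by
  have mul_mem_iff {x y z : ℕ} : (c * x, c * y, c * z) ∈ tripleCompositions (c * d) ↔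
      (x, y, z) ∈ tripleCompositions d := by
    simp only [mem_tripleCompositions, Nat.mul_pos_iff_of_pos_left hc, ← mul_add,
      Nat.mul_left_cancel_iff hc]
  rw [tripartCount_eq]
  refine card_bij (fun v _ => (c * v.1, c * v.2.1, c * v.2.2)) ?_ ?_ ?_
  · rintro ⟨x, y, z⟩ hv
    simp only [mem_filter] at hv ⊢
    rw [mul_mem_iff, tripleGcd_mul, hv.2, mul_one]
    exact ⟨hv.1, rfl⟩
  · rintro ⟨x, y, z⟩ - ⟨x', y', z'⟩ - h
    simpa only [Prod.mk.injEq, Nat.mul_left_cancel_iff hc] using h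
  · rintro ⟨x, y, z⟩ hv
    simp only [mem_filter] at hv
    obtain ⟨⟨x, rfl⟩, ⟨y, rfl⟩, ⟨z, rfl⟩⟩ := dvd_tripleGcd_iff.1 hv.2.symm.dvd
    rw [mul_mem_iff, tripleGcd_mul, mul_eq_left₀ hc.ne'] at hv
    exact ⟨(x, y, z), mem_filter.2 hv, rfl⟩

lemma sum_divisors_tripartCount (n : ℕ) :
    ∑ d ∈ n.divisors, tripartCount d = (n - 1).choose 2 := by
  rcases n.eq_zero_or_pos with rfl | hn
  · simp
  have gcd_dvd : ∀ v ∈ tripleCompositions n, tripleGcd v ∣ n := by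
    rintro ⟨x, y, z⟩ hv
    obtain ⟨hx, hy, hz⟩ := dvd_tripleGcd_iff.1 (dvd_refl (tripleGcd (x, y, z)))
    rw [← (mem_tripleCompositions.1 hv).2.2.2]
    exact (hx.add hy).add hz
  rw [← Nat.sum_div_divisors, ← card_tripleCompositions, card_eq_sum_card_fiberwise
    (f := tripleGcd) fun v hv => Nat.mem_divisors.2 ⟨gcd_dvd v hv, hn.ne'⟩]
  refine sum_congr rfl fun c hc => ?_
  have hc0 := Nat.pos_of_mem_divisors hc
  obtain ⟨d, rfl⟩ := Nat.dvd_of_mem_divisors hc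
  rw [Nat.mul_div_cancel_left _ hc0, tripartCount_eq_card_tripleGcd_eq hc0]

theorem principal_discriminant_count_general (a : ℕ) :
    ((bipartCount a : ℤ) + (tripartCount a : ℤ)) = F a := by
  rcases a.eq_zero_or_pos with rfl | ha
  · simp [bipartCount, tripartCount, F]
  have sum_divisors : ∀ n > 0, ∑ d ∈ n.divisors, ((bipartCount d : ℤ) + tripartCount d) =
      ((n / 2 : ℕ) : ℤ) + (((n - 1) * (n - 2) / 2 : ℕ) : ℤ) := fun n _ => by
    rw [sum_add_distrib, ← Nat.cast_sum, ← Nat.cast_sum, sum_divisors_bipartCount,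
      sum_divisors_tripartCount, Nat.choose_two_right, Nat.sub_sub]
  rw [← ArithmeticFunction.sum_eq_iff_sum_mul_moebius_eq.1 sum_divisors a ha, F]
  exact Nat.sum_divisorsAntidiagonal' fun x y => (ArithmeticFunction.moebius x : ℤ) *
    (((y / 2 : ℕ) : ℤ) + (((y - 1) * (y - 2) / 2 : ℕ) : ℤ))

theorem principal_discriminant_count (a : ℕ) (ha : 2 ≤ a) :
    ((bipartCount a : ℤ) + (tripartCount a : ℤ)) = F a :=
  principal_discriminant_count_general a
end

section
/- For every integer a ≥ 4, the number N of orbits of the action on E_1(a) of the group generated by S and T satisfies 6·N = 2·F(a) − φ(a); equivalently, N = F(a)/3 − φ(a)/6, where F(a) = Σ_{d ∣ a} μ(a/d)·(⌊d/2⌋ + (d−1)(d−2)/2). -/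
/-- The map `S(x,y,z) = (-x,-y,-z)`. -/
def Sm {n : ℕ} (v : ZMod n × ZMod n × ZMod n) : ZMod n × ZMod n × ZMod n :=
  (-v.1, -v.2.1, -v.2.2)

/-- The map `T(x,y,z) = (y,z,x)`. -/
def Tm {n : ℕ} (v : ZMod n × ZMod n × ZMod n) : ZMod n × ZMod n × ZMod n :=
  (v.2.1, v.2.2, v.1)

/-- `E_k(a)`: triples `(x,y,z)` of nonzero elements of `ℤ/aℤ` with `x+y+z = 0` whose
integer representatives satisfy `gcd(x̃,ỹ,z̃,a) = k`. -/
def Ek (a k : ℕ) : Set (ZMod a × ZMod a × ZMod a) :=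
  {v | v.1 ≠ 0 ∧ v.2.1 ≠ 0 ∧ v.2.2 ≠ 0 ∧ v.1 + v.2.1 + v.2.2 = 0 ∧
    Nat.gcd (Nat.gcd (Nat.gcd v.1.val v.2.1.val) v.2.2.val) a = k}

/-- Generating relation on `E_1(a)` for the action of the group generated by `S` and `T`:
its generated equivalence classes are exactly the `⟨S,T⟩`-orbits. -/
def triRel (a : ℕ) (α β : Ek a 1) : Prop :=
  (β : ZMod a × ZMod a × ZMod a) = Sm (α : ZMod a × ZMod a × ZMod a) ∨
  (β : ZMod a × ZMod a × ZMod a) = Tm (α : ZMod a × ZMod a × ZMod a)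

/-!
`S` and `T` commute and `S² = T³ = 1`, so `⟨S, T⟩` is cyclic of order six, generated by
`rot = S ∘ T : (x, y, z) ↦ (-y, -z, -x)`, with `rot³ = S` and `rot⁴ = T`. For `a ≥ 4` it acts
freely on `E₁(a)`: a fixed point of `rot²` has `x = y = z`, so `3x = 0` with `x` a unit, forcing
`a ∣ 3`; a fixed point of `rot³ = S` has `x, y, z` all equal to the element of order two of
`ℤ/aℤ`, contradicting `x + y + z = 0`. Hence `6 N = |E₁(a)|`.

Multiplication by `d` identifies `E₁(m)` with `E_d(dm)`, so `∑_{e ∣ n} |E₁(e)| = |E(n)| =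
(n - 1)(n - 2)`. Adding `∑_{e ∣ n} φ(e) = n` and `∑_{e ∣ n} ([e = 2] - [e = 1]) = -(n mod 2)`, the
right-hand side becomes `2 (⌊n/2⌋ + (n - 1)(n - 2)/2)`, and Möbius inversion yields
`|E₁(a)| + φ(a) = 2 F(a)` for `a ≥ 3`.
-/

open Function

section EqvGenClasses

variable {α : Type*}

lemma card_eq_mul_card_quot [Finite α] (r : α → α → Prop) {k : ℕ}
    (hk : ∀ x, Nat.card {y // Relation.EqvGen r x y} = k) :
    Nat.card α = k * Nat.card (Quot r) := by
  have : Fintype (Quot r) := Fintype.ofFinite _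
  rw [← Nat.card_congr (Equiv.sigmaFiberEquiv (Quot.mk r)), Nat.card_sigma,
    Nat.card_eq_fintype_card, ← Finset.card_univ, mul_comm, ← smul_eq_mul, ← Finset.sum_const]
  refine Finset.sum_congr rfl fun q _ => ?_
  obtain ⟨x, rfl⟩ := Quot.mk_surjective q
  rw [← hk x]
  exact Nat.card_congr <| Equiv.subtypeEquivRight fun y =>
    Quot.eq.trans ⟨Relation.EqvGen.symm _ _, Relation.EqvGen.symm _ _⟩

lemma eqvGen_iff_exists_iterate_eq {r : α → α → Prop} {f : α → α} {N : ℕ} (hN : 0 < N)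
    (hf : ∀ x, IsPeriodicPt f N x) (hr : ∀ x y, r x y → ∃ n, f^[n] x = y)
    (hfr : ∀ x, Relation.EqvGen r x (f x)) {x y : α} :
    Relation.EqvGen r x y ↔ ∃ n, f^[n] x = y := by
  constructor
  · intro h
    induction h with
    | rel x y hxy => exact hr x y hxy
    | refl x => exact ⟨0, rfl⟩
    | symm x y _ ih =>
      obtain ⟨n, rfl⟩ := ih
      refine ⟨N * n - n, ?_⟩
      rw [← iterate_add_apply, Nat.sub_add_cancel (Nat.le_mul_of_pos_left n hN)]
      exact (hf x).mul_const n
    | trans x y z _ _ ihxy ihyz =>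
      obtain ⟨m, rfl⟩ := ihxy
      obtain ⟨n, rfl⟩ := ihyz
      exact ⟨n + m, iterate_add_apply f n m x⟩
  · rintro ⟨n, rfl⟩
    induction n with
    | zero => exact Relation.EqvGen.refl x
    | succ n ih => exact ih.trans _ _ _ (by rw [iterate_succ_apply']; exact hfr _)

lemma card_iterate_orbit_eq_minimalPeriod {f : α → α} {x : α} (hx : x ∈ periodicPts f) :
    Nat.card {y // ∃ n, f^[n] x = y} = minimalPeriod f x := by
  rw [← Nat.card_fin (minimalPeriod f x)]
  refine (Nat.card_eq_of_bijective (fun i => ⟨f^[i] x, i, rfl⟩) ⟨?_, ?_⟩).symm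
  · intro i j hij
    exact Fin.ext (iterate_injOn_Iio_minimalPeriod i.2 j.2 (congrArg Subtype.val hij))
  · rintro ⟨y, n, rfl⟩
    exact ⟨⟨n % minimalPeriod f x, Nat.mod_lt _ (minimalPeriod_pos_of_mem_periodicPts hx)⟩,
      Subtype.ext iterate_mod_minimalPeriod_eq⟩

end EqvGenClasses

lemma ZMod.dvd_val_neg_iff {n e : ℕ} (he : e ∣ n) (x : ZMod n) : e ∣ (-x).val ↔ e ∣ x.val := by
  rcases n.eq_zero_or_pos with rfl | hn
  · rw [ZMod.val_neg']
  have : NeZero n := ⟨hn.ne'⟩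
  by_cases hx : x = 0
  · simp [hx]
  have : NeZero x := ⟨hx⟩
  rw [ZMod.val_neg_of_ne_zero, Nat.dvd_sub_iff_right x.val_lt.le he]

lemma ZMod.two_mul_val_eq {n : ℕ} [NeZero n] {x : ZMod n} (hx : x ≠ 0) (h : x + x = 0) :
    2 * x.val = n := by
  have hdvd : n ∣ 2 * x.val := by
    rw [← ZMod.natCast_eq_zero_iff]
    push_cast [ZMod.natCast_zmod_val]
    linear_combination h
  have hpos : x.val ≠ 0 := (ZMod.val_ne_zero x).mpr hx
  exact Nat.eq_of_dvd_of_lt_two_mul (by omega) hdvd (by have := x.val_lt; omega)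

lemma ZMod.eq_of_add_self_eq_zero {n : ℕ} [NeZero n] {x y : ZMod n} (hx : x ≠ 0) (hy : y ≠ 0)
    (hxx : x + x = 0) (hyy : y + y = 0) : x = y :=
  ZMod.val_injective n <| by
    have := ZMod.two_mul_val_eq hx hxx
    have := ZMod.two_mul_val_eq hy hyy
    omega

lemma ZMod.add_add_eq_zero_iff_dvd {n : ℕ} [NeZero n] (x y z : ZMod n) :
    x + y + z = 0 ↔ n ∣ x.val + y.val + z.val := by
  rw [← ZMod.natCast_eq_zero_iff]
  push_cast [ZMod.natCast_zmod_val]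
  rfl

lemma ZMod.card_ne_zero_and_add_ne_zero {n : ℕ} [NeZero n] {x : ZMod n} (hx : x ≠ 0) :
    Nat.card {y : ZMod n // y ≠ 0 ∧ x + y ≠ 0} = n - 2 := by
  classical
  have hcompl : ({y | y ≠ 0 ∧ x + y ≠ 0} : Finset (ZMod n)) = {0, -x}ᶜ := by
    ext y
    simp only [Finset.mem_filter, Finset.mem_univ, true_and, Finset.mem_compl,
      Finset.mem_insert, Finset.mem_singleton, not_or, add_comm x, ne_eq, add_eq_zero_iff_eq_neg]
  rw [Nat.card_eq_fintype_card, Fintype.card_subtype, hcompl, Finset.card_compl,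
    Finset.card_pair (by simpa [eq_comm] using hx), ZMod.card]

section Orbits

variable {a k : ℕ}

lemma Sm_mem_Ek {v : ZMod a × ZMod a × ZMod a} (hv : v ∈ Ek a k) : Sm v ∈ Ek a k := by
  obtain ⟨hx, hy, hz, hsum, hgcd⟩ := hv
  refine ⟨neg_ne_zero.mpr hx, neg_ne_zero.mpr hy, neg_ne_zero.mpr hz, ?_, ?_⟩
  · simp only [Sm]
    linear_combination -hsum
  · rw [← hgcd]
    refine Nat.dvd_left_iff_eq.mp fun e => ?_
    simp only [Sm, Nat.dvd_gcd_iff]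
    constructor <;> rintro ⟨⟨⟨h1, h2⟩, h3⟩, hn⟩ <;>
      simp_all [ZMod.dvd_val_neg_iff hn]

lemma Tm_mem_Ek {v : ZMod a × ZMod a × ZMod a} (hv : v ∈ Ek a k) : Tm v ∈ Ek a k := by
  obtain ⟨hx, hy, hz, hsum, hgcd⟩ := hv
  refine ⟨hy, hz, hx, ?_, ?_⟩
  · simp only [Tm]
    linear_combination hsum
  · rw [← hgcd]
    simp only [Tm]
    rw [Nat.gcd_comm _ v.1.val, ← Nat.gcd_assoc]

def rot {n : ℕ} (v : ZMod n × ZMod n × ZMod n) : ZMod n × ZMod n × ZMod n :=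
  Sm (Tm v)

lemma rot_mapsTo : Set.MapsTo rot (Ek a k) (Ek a k) :=
  fun _ hv => Sm_mem_Ek (Tm_mem_Ek hv)

lemma rot_iterate_three (v : ZMod a × ZMod a × ZMod a) : rot^[3] v = Sm v := by
  simp [rot, Sm, Tm]

lemma rot_iterate_four (v : ZMod a × ZMod a × ZMod a) : rot^[4] v = Tm v := by
  simp [rot, Sm, Tm]

lemma isPeriodicPt_rot_six (v : ZMod a × ZMod a × ZMod a) : IsPeriodicPt rot 6 v := by
  simp [IsPeriodicPt, IsFixedPt, rot, Sm, Tm]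

lemma not_isPeriodicPt_rot_two (ha : 4 ≤ a) {v : ZMod a × ZMod a × ZMod a} (hv : v ∈ Ek a 1) :
    ¬IsPeriodicPt rot 2 v := by
  have : NeZero a := ⟨by omega⟩
  obtain ⟨x, y, z⟩ := v
  obtain ⟨-, -, -, hsum, hgcd⟩ := hv
  intro h
  simp only [IsPeriodicPt, IsFixedPt, iterate_succ, iterate_zero, comp_apply, id_eq, rot, Sm, Tm,
    neg_neg, Prod.mk.injEq] at h
  obtain ⟨rfl, rfl, -⟩ := h
  simp only [Nat.gcd_self] at hgcd
  have hunit : IsUnit z := by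
    simpa only [ZMod.natCast_zmod_val] using (ZMod.isUnit_iff_coprime z.val a).mpr hgcd
  have h3 : ((3 : ℕ) : ZMod a) = 0 := by
    rw [← hunit.mul_left_eq_zero]
    push_cast
    linear_combination hsum
  have := Nat.le_of_dvd (by norm_num) ((ZMod.natCast_eq_zero_iff 3 a).mp h3)
  omega

lemma not_isPeriodicPt_rot_three [NeZero a] {v : ZMod a × ZMod a × ZMod a} (hv : v ∈ Ek a k) :
    ¬IsPeriodicPt rot 3 v := by
  obtain ⟨x, y, z⟩ := v
  obtain ⟨hx, hy, hz, hsum, -⟩ : x ≠ 0 ∧ y ≠ 0 ∧ z ≠ 0 ∧ x + y + z = 0 ∧ _ := hv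
  intro h
  simp only [IsPeriodicPt, IsFixedPt, rot_iterate_three, Sm, Prod.mk.injEq] at h
  obtain ⟨h1, h2, h3⟩ := h
  have hxx : x + x = 0 := by linear_combination -h1
  have hyx : y = x := ZMod.eq_of_add_self_eq_zero hy hx (by linear_combination -h2) hxx
  have hzx : z = x := ZMod.eq_of_add_self_eq_zero hz hx (by linear_combination -h3) hxx
  subst hyx hzx
  exact hx (by linear_combination hsum - hxx)

lemma minimalPeriod_rot (ha : 4 ≤ a) {v : ZMod a × ZMod a × ZMod a} (hv : v ∈ Ek a 1) :
    minimalPeriod rot v = 6 := by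
  have : NeZero a := ⟨by omega⟩
  have h6 := (isPeriodicPt_rot_six v).minimalPeriod_dvd
  have h2 : ¬minimalPeriod rot v ∣ 2 := fun h =>
    not_isPeriodicPt_rot_two ha hv (isPeriodicPt_iff_minimalPeriod_dvd.mpr h)
  have h3 : ¬minimalPeriod rot v ∣ 3 := fun h =>
    not_isPeriodicPt_rot_three hv (isPeriodicPt_iff_minimalPeriod_dvd.mpr h)
  have : minimalPeriod rot v ≤ 6 := Nat.le_of_dvd (by norm_num) h6
  interval_cases minimalPeriod rot v <;> simp_all

def rotE (a : ℕ) : Ek a 1 → Ek a 1 :=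
  rot_mapsTo.restrict rot (Ek a 1) (Ek a 1)

lemma isPeriodicPt_rotE_iff {n : ℕ} {v : Ek a 1} :
    IsPeriodicPt (rotE a) n v ↔ IsPeriodicPt rot n (v : ZMod a × ZMod a × ZMod a) := by
  rw [IsPeriodicPt, IsFixedPt, Subtype.ext_iff, rotE, Set.MapsTo.coe_iterate_restrict]
  rfl

lemma minimalPeriod_rotE (ha : 4 ≤ a) (v : Ek a 1) : minimalPeriod (rotE a) v = 6 :=
  (minimalPeriod_eq_minimalPeriod_iff.mpr fun _ => isPeriodicPt_rotE_iff).trans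
    (minimalPeriod_rot ha v.2)

lemma eqvGen_triRel_iff {v w : Ek a 1} :
    Relation.EqvGen (triRel a) v w ↔ ∃ n, (rotE a)^[n] v = w := by
  refine eqvGen_iff_exists_iterate_eq (N := 6) (by norm_num)
    (fun v => isPeriodicPt_rotE_iff.mpr (isPeriodicPt_rot_six _)) ?_ fun v => ?_
  · rintro v w (hS | hT)
    · exact ⟨3, Subtype.ext <| by
        rw [rotE, Set.MapsTo.coe_iterate_restrict, rot_iterate_three, hS]⟩
    · exact ⟨4, Subtype.ext <| by
        rw [rotE, Set.MapsTo.coe_iterate_restrict, rot_iterate_four, hT]⟩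
  · let Tv : Ek a 1 := ⟨Tm v, Tm_mem_Ek v.2⟩
    exact (Relation.EqvGen.rel v Tv (Or.inr rfl)).trans _ _ _
      (Relation.EqvGen.rel Tv _ (Or.inl rfl))

lemma card_Ek_one_eq_six_mul (ha : 4 ≤ a) :
    Nat.card (Ek a 1) = 6 * Nat.card (Quot (triRel a)) := by
  have : NeZero a := ⟨by omega⟩
  refine card_eq_mul_card_quot _ fun v => ?_
  simp_rw [eqvGen_triRel_iff]
  rw [card_iterate_orbit_eq_minimalPeriod, minimalPeriod_rotE ha]
  rw [← minimalPeriod_pos_iff_mem_periodicPts, minimalPeriod_rotE ha]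
  norm_num

end Orbits

def E (n : ℕ) : Set (ZMod n × ZMod n × ZMod n) :=
  {v | v.1 ≠ 0 ∧ v.2.1 ≠ 0 ∧ v.2.2 ≠ 0 ∧ v.1 + v.2.1 + v.2.2 = 0}

lemma card_E {n : ℕ} [NeZero n] : Nat.card (E n) = (n - 1) * (n - 2) := by
  let e : E n ≃ Σ x : {x : ZMod n // x ≠ 0}, {y : ZMod n // y ≠ 0 ∧ (x : ZMod n) + y ≠ 0} :=
    { toFun := fun v => ⟨⟨v.1.1, v.2.1⟩, v.1.2.1, v.2.2.1,
        fun h => v.2.2.2.1 (by linear_combination v.2.2.2.2 - h)⟩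
      invFun := fun s => ⟨(s.1, s.2, -s.1 - s.2), s.1.2, s.2.2.1,
        fun h => s.2.2.2 (by linear_combination -h), by ring⟩
      left_inv := fun v => Subtype.ext <| Prod.ext rfl <| Prod.ext rfl <| by
        linear_combination -v.2.2.2.2
      right_inv := fun _ => rfl }
  rw [Nat.card_congr e, Nat.card_sigma, Finset.sum_congr rfl fun x _ =>
    ZMod.card_ne_zero_and_add_ne_zero x.2, Finset.sum_const, Finset.card_univ, smul_eq_mul]
  simp

lemma sum_card_Ek {n : ℕ} [NeZero n] : ∑ d ∈ n.divisors, Nat.card (Ek n d) = Nat.card (E n) := by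
  classical
  simp only [Nat.card_eq_fintype_card, Fintype.card_subtype]
  rw [Finset.card_eq_sum_card_fiberwise (t := n.divisors)
    (f := fun v => Nat.gcd (Nat.gcd (Nat.gcd v.1.val v.2.1.val) v.2.2.val) n)
    fun _ _ => Nat.mem_divisors.mpr ⟨Nat.gcd_dvd_right _ _, NeZero.ne n⟩]
  refine Finset.sum_congr rfl fun d _ => congrArg Finset.card ?_
  ext v
  rw [Finset.mem_filter, Finset.mem_filter, Finset.mem_filter]
  simp only [Finset.mem_univ, true_and, E, Ek, Set.mem_ofPred_eq, and_assoc]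

section Scaling

variable {d m : ℕ} [NeZero d] [NeZero m]

variable (d) in
def scale (t : ZMod m) : ZMod (d * m) :=
  ((d * t.val : ℕ) : ZMod (d * m))

lemma val_scale (t : ZMod m) : (scale d t).val = d * t.val :=
  ZMod.val_cast_of_lt (Nat.mul_lt_mul_of_pos_left t.val_lt (NeZero.pos d))

lemma scale_injective : Injective (scale (m := m) d) := fun s t h =>
  ZMod.val_injective m <| Nat.eq_of_mul_eq_mul_left (NeZero.pos d) <| by
    rw [← val_scale, ← val_scale, h]

lemma scale_eq_zero_iff {t : ZMod m} : scale d t = 0 ↔ t = 0 := by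
  rw [← ZMod.val_eq_zero, val_scale, mul_eq_zero, ZMod.val_eq_zero, or_iff_right (NeZero.ne d)]

lemma scale_add_add_eq_zero_iff {x y z : ZMod m} :
    scale d x + scale d y + scale d z = 0 ↔ x + y + z = 0 := by
  rw [ZMod.add_add_eq_zero_iff_dvd, ZMod.add_add_eq_zero_iff_dvd, val_scale, val_scale, val_scale,
    ← mul_add, ← mul_add, Nat.mul_dvd_mul_iff_left (NeZero.pos d)]

lemma exists_scale_eq {X : ZMod (d * m)} (h : d ∣ X.val) : ∃ t, scale d t = X := by
  obtain ⟨u, hu⟩ := h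
  have hu_lt : u < m := Nat.lt_of_mul_lt_mul_left (hu ▸ X.val_lt)
  exact ⟨u, ZMod.val_injective _ <| by rw [val_scale, ZMod.val_cast_of_lt hu_lt, hu]⟩

variable (d) in
def scale3 : ZMod m × ZMod m × ZMod m → ZMod (d * m) × ZMod (d * m) × ZMod (d * m) :=
  Prod.map (scale d) (Prod.map (scale d) (scale d))

lemma scale3_mem_Ek_iff {v : ZMod m × ZMod m × ZMod m} :
    scale3 d v ∈ Ek (d * m) d ↔ v ∈ Ek m 1 := by
  simp only [Ek, scale3, Set.mem_ofPred_eq, Prod.map_fst, Prod.map_snd, ne_eq, scale_eq_zero_iff,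
    scale_add_add_eq_zero_iff, val_scale, Nat.gcd_mul_left, Nat.mul_eq_left (NeZero.ne d)]

lemma Ek_mul_self_eq_image : Ek (d * m) d = scale3 d '' Ek m 1 := by
  ext v
  refine ⟨fun hv => ?_, fun ⟨w, hw, hvw⟩ => hvw ▸ scale3_mem_Ek_iff.mpr hw⟩
  have hdvd : d ∣ Nat.gcd (Nat.gcd (Nat.gcd v.1.val v.2.1.val) v.2.2.val) (d * m) :=
    hv.2.2.2.2.symm ▸ dvd_rfl
  simp only [Nat.dvd_gcd_iff] at hdvd
  obtain ⟨⟨⟨hx, hy⟩, hz⟩, -⟩ := hdvd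
  obtain ⟨x, hx⟩ := exists_scale_eq hx
  obtain ⟨y, hy⟩ := exists_scale_eq hy
  obtain ⟨z, hz⟩ := exists_scale_eq hz
  have hv_eq : scale3 d (x, y, z) = v := by simp [scale3, hx, hy, hz]
  exact ⟨(x, y, z), scale3_mem_Ek_iff.mp (hv_eq ▸ hv), hv_eq⟩

lemma card_Ek_mul_self : Nat.card (Ek (d * m) d) = Nat.card (Ek m 1) := by
  rw [Ek_mul_self_eq_image, Nat.card_coe_set_eq, Nat.card_coe_set_eq,
    Set.ncard_image_of_injective (f := scale3 d) _ <|
      scale_injective.prodMap (scale_injective.prodMap scale_injective)]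

end Scaling

open scoped ArithmeticFunction.Moebius

lemma sum_divisors_card_Ek_one {n : ℕ} [NeZero n] :
    ∑ e ∈ n.divisors, Nat.card (Ek e 1) = (n - 1) * (n - 2) := by
  rw [← Nat.sum_div_divisors, ← card_E, ← sum_card_Ek]
  refine Finset.sum_congr rfl fun d hd => ?_
  obtain ⟨⟨m, hm⟩, hn⟩ := Nat.mem_divisors.mp hd
  have : NeZero d := ⟨left_ne_zero_of_mul (hm ▸ hn)⟩
  have : NeZero m := ⟨right_ne_zero_of_mul (hm ▸ hn)⟩
  rw [hm, Nat.mul_div_cancel_left m (NeZero.pos d), card_Ek_mul_self]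

lemma eq_sum_moebius_mul_of_sum_divisors_eq {f g : ℕ → ℤ}
    (h : ∀ n > 0, ∑ d ∈ n.divisors, f d = g n) {n : ℕ} (hn : 0 < n) :
    f n = ∑ d ∈ n.divisors, μ (n / d) * g d := by
  rw [← ArithmeticFunction.sum_eq_iff_sum_mul_moebius_eq.mp h n hn]
  simp only [Int.cast_id]
  exact Nat.sum_divisorsAntidiagonal' fun i j => μ i * g j

lemma sum_divisors_ite_two_sub_ite_one {n : ℕ} (hn : 0 < n) :
    ∑ e ∈ n.divisors, ((if e = 2 then 1 else 0) - (if e = 1 then 1 else 0) : ℤ) =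
      -((n % 2 : ℕ) : ℤ) := by
  rw [Finset.sum_sub_distrib, Finset.sum_ite_eq', Finset.sum_ite_eq',
    if_pos (Nat.one_mem_divisors.mpr hn.ne')]
  simp only [Nat.mem_divisors, ne_eq, hn.ne', not_false_eq_true, and_true]
  split_ifs <;> omega

lemma two_mul_halves (d : ℕ) :
    2 * (((d / 2 : ℕ) : ℤ) + (((d - 1) * (d - 2) / 2 : ℕ) : ℤ)) =
      (((d - 1) * (d - 2) : ℕ) : ℤ) + d - (d % 2 : ℕ) := by
  have h1 : 2 * ((d - 1) * (d - 2) / 2) = (d - 1) * (d - 2) :=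
    Nat.two_mul_div_two_of_even (Nat.even_mul_pred_self (d - 1))
  have h2 := Nat.div_add_mod d 2
  omega

lemma card_Ek_one_add_totient {a : ℕ} (ha : 3 ≤ a) :
    (Nat.card (Ek a 1) : ℤ) + a.totient =
      ∑ d ∈ a.divisors, μ (a / d) * ((((d - 1) * (d - 2) : ℕ) : ℤ) + d - (d % 2 : ℕ)) := by
  have key := eq_sum_moebius_mul_of_sum_divisors_eq
    (f := fun e => (Nat.card (Ek e 1) : ℤ) + e.totient +
      ((if e = 2 then 1 else 0) - (if e = 1 then 1 else 0)))
    (g := fun n => (((n - 1) * (n - 2) : ℕ) : ℤ) + n - (n % 2 : ℕ)) ?_ (by omega : 0 < a)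
  · simpa [show a ≠ 2 by omega, show a ≠ 1 by omega] using key
  · intro n hn
    have : NeZero n := ⟨hn.ne'⟩
    rw [Finset.sum_add_distrib, Finset.sum_add_distrib, ← Nat.cast_sum, ← Nat.cast_sum,
      sum_divisors_card_Ek_one, Nat.sum_totient, sum_divisors_ite_two_sub_ite_one hn]
    ring

theorem triangle_chamber_count (a : ℕ) (ha : 4 ≤ a) :
    6 * (Nat.card (Quot (triRel a)) : ℤ) = 2 * F a - (Nat.totient a : ℤ) := by
  have two_mul_F : 2 * F a =
      ∑ d ∈ a.divisors, μ (a / d) * ((((d - 1) * (d - 2) : ℕ) : ℤ) + d - (d % 2 : ℕ)) := by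
    rw [F, Finset.mul_sum]
    exact Finset.sum_congr rfl fun d _ => by rw [mul_left_comm, two_mul_halves]
  rw [two_mul_F, ← card_Ek_one_add_totient (by omega), card_Ek_one_eq_six_mul ha]
  push_cast
  ring
end

section
/- For every integer a ≥ 3, 2·(F(a) + φ(a)) = Σ_{d ∣ a} μ(a/d)·d², where F(a) = Σ_{d ∣ a} μ(a/d)·(⌊d/2⌋ + (d−1)(d−2)/2), μ is the Möbius function, and φ is Euler's totient function. -/
/-!
Doubling the summand of `F` and adding `2d` gives `d² + 2 − (d mod 2)`, and `2 − (d mod 2)` is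
the number of common divisors of `d` and `2`. Möbius inversion turns `d ↦ d` into `φ`, and turns
`d ↦ #(gcd d 2).divisors = Σ_{e ∣ d} [e ∣ 2]` into the indicator of the divisors of `2`, which
vanishes at every `a ≥ 3`.
-/

open ArithmeticFunction Finset
open scoped ArithmeticFunction.Moebius

theorem sum_divisors_moebius_div_mul_eq {R : Type*} [Ring R] {f g : ℕ → R}
    (hfg : ∀ n > 0, ∑ i ∈ n.divisors, f i = g n) {n : ℕ} (hn : 0 < n) :
    ∑ d ∈ n.divisors, (μ (n / d) : R) * g d = f n := by
  rw [← Nat.sum_divisorsAntidiagonal' (f := fun x y => (μ x : R) * g y)]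
  exact sum_eq_iff_sum_mul_moebius_eq.mp hfg n hn

theorem totient_eq_sum_moebius_div_mul {n : ℕ} (hn : 0 < n) :
    (n.totient : ℤ) = ∑ d ∈ n.divisors, μ (n / d) * (d : ℤ) := by
  simpa using (sum_divisors_moebius_div_mul_eq (f := fun i => (i.totient : ℤ))
    (g := fun i => (i : ℤ)) (fun i _ => by exact_mod_cast Nat.sum_totient i) hn).symm

theorem sum_divisors_boole_dvd (m : ℕ) {d : ℕ} (hd : d ≠ 0) :
    ∑ e ∈ d.divisors, (if e ∣ m then 1 else 0 : ℤ) = #(d.gcd m).divisors := by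
  rw [sum_boole]
  congr 2
  ext e
  simp [Nat.dvd_gcd_iff, hd]

theorem sum_moebius_div_mul_card_divisors_gcd (m : ℕ) {n : ℕ} (hn : 0 < n) :
    ∑ d ∈ n.divisors, μ (n / d) * (#(d.gcd m).divisors : ℤ) = if n ∣ m then 1 else 0 := by
  simpa using sum_divisors_moebius_div_mul_eq (f := fun e => if e ∣ m then (1 : ℤ) else 0)
    (fun i hi => sum_divisors_boole_dvd m hi.ne') hn

theorem card_divisors_gcd_two_add_mod_two (d : ℕ) : #(d.gcd 2).divisors + d % 2 = 2 := by
  rcases Nat.even_or_odd d with hd | hd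
  · rw [Nat.gcd_eq_right hd.two_dvd, Nat.even_iff.mp hd]
    decide
  · rw [(Nat.coprime_two_right.mpr hd).gcd_eq_one, Nat.odd_iff.mp hd]
    decide

theorem two_mul_div_two_add_mul_div_two {d : ℕ} (hd : d ≠ 0) :
    2 * (d / 2 + (d - 1) * (d - 2) / 2) + 2 * d + d % 2 = d ^ 2 + 2 := by
  rcases d with _ | _ | e
  · contradiction
  · rfl
  · have hhalf := Nat.div_add_mod (e + 1 + 1) 2
    have htri : 2 * ((e + 1) * e / 2) = (e + 1) * e :=
      Nat.mul_div_cancel' (mul_comm e (e + 1) ▸ (Nat.even_mul_succ_self e).two_dvd)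
    rw [show e + 1 + 1 - 1 = e + 1 by omega, show e + 1 + 1 - 2 = e by omega]
    nlinarith

theorem two_mul_F_add_totient (a : ℕ) (ha : 3 ≤ a) :
    2 * (F a + (Nat.totient a : ℤ)) =
      ∑ d ∈ a.divisors, ArithmeticFunction.moebius (a / d) * (d : ℤ) ^ 2 := by
  have ha0 : 0 < a := by omega
  have ha2 : ¬a ∣ 2 := fun h => by linarith [Nat.le_of_dvd two_pos h]
  have hsummand : ∀ d ∈ a.divisors,
      2 * (((d / 2 : ℕ) : ℤ) + (((d - 1) * (d - 2) / 2 : ℕ) : ℤ)) + 2 * d =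
        d ^ 2 + #(d.gcd 2).divisors := by
    intro d hd
    have h₁ := two_mul_div_two_add_mul_div_two (Nat.pos_of_mem_divisors hd).ne'
    have h₂ := card_divisors_gcd_two_add_mod_two d
    have h : 2 * (d / 2 + (d - 1) * (d - 2) / 2) + 2 * d = d ^ 2 + #(d.gcd 2).divisors := by
      omega
    exact_mod_cast h
  calc 2 * (F a + (a.totient : ℤ))
      = ∑ d ∈ a.divisors, μ (a / d) *
          (2 * (((d / 2 : ℕ) : ℤ) + (((d - 1) * (d - 2) / 2 : ℕ) : ℤ)) + 2 * d) := by
        rw [F, totient_eq_sum_moebius_div_mul ha0, mul_add, mul_sum, mul_sum,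
          ← sum_add_distrib]
        exact sum_congr rfl fun d _ => by ring
    _ = ∑ d ∈ a.divisors, μ (a / d) * ((d : ℤ) ^ 2 + #(d.gcd 2).divisors) :=
        sum_congr rfl fun d hd => by rw [hsummand d hd]
    _ = ∑ d ∈ a.divisors, μ (a / d) * (d : ℤ) ^ 2 +
          ∑ d ∈ a.divisors, μ (a / d) * (#(d.gcd 2).divisors : ℤ) := by
        simp only [mul_add, sum_add_distrib]
    _ = ∑ d ∈ a.divisors, μ (a / d) * (d : ℤ) ^ 2 := by
        rw [sum_moebius_div_mul_card_divisors_gcd 2 ha0, if_neg ha2, add_zero]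
end

section
/- For every integer a ≥ 3, F(a) + φ(a) = (a²/2) · ∏_{p ∣ a, p prime} (1 − 1/p²), as an identity of rational numbers, where F(a) = Σ_{d ∣ a} μ(a/d)·(⌊d/2⌋ + (d−1)(d−2)/2). -/
/-!
Twice the summand of `F` is `(d - 1)² + [2 ∣ d]`, so `2 F(a)` is the Möbius inversion of
`d ↦ d² - 2d + 1 + [2 ∣ d]` evaluated at `a`, namely `J₂(a) - 2 φ(a) + [a = 1] + [a = 2]`, where
`J₂(a) = a² ∏_{p ∣ a} (1 - p⁻²)` is Jordan's totient (computed from its multiplicativity).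
For `a ≥ 3` both indicator terms vanish.
-/

open ArithmeticFunction Finset
open scoped ArithmeticFunction.Moebius

section Ring

variable {R : Type*} [Ring R]

theorem moebius_mul_apply_eq_sum_divisors (f : ArithmeticFunction R) (n : ℕ) :
    ((μ : ArithmeticFunction R) * f) n = ∑ d ∈ n.divisors, (μ (n / d) : R) * f d := by
  rw [mul_apply, Nat.sum_divisorsAntidiagonal' fun x y => (μ : ArithmeticFunction R) x * f y]
  simp only [intCoe_apply]

theorem sum_divisors_moebius_div (n : ℕ) :
    ∑ d ∈ n.divisors, (μ (n / d) : R) = if n = 1 then 1 else 0 := by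
  rw [Nat.sum_div_divisors n fun d => (μ d : R), ← one_apply (R := R),
    ← coe_moebius_mul_coe_zeta, coe_mul_zeta_apply]
  simp only [intCoe_apply]

theorem sum_divisors_mul_filter_dvd_moebius_div {k : ℕ} (hk : 0 < k) (m : ℕ) :
    ∑ d ∈ (k * m).divisors with k ∣ d, (μ (k * m / d) : R) =
      ∑ c ∈ m.divisors, (μ (m / c) : R) := by
  refine sum_nbij' (· / k) (k * ·) ?_ ?_ ?_ ?_ ?_
  · rintro _ hd
    rw [mem_filter, Nat.mem_divisors] at hd
    obtain ⟨⟨hdvd, hkm⟩, c, rfl⟩ := hd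
    rw [Nat.mul_div_cancel_left c hk]
    exact Nat.mem_divisors.mpr
      ⟨Nat.dvd_of_mul_dvd_mul_left hk hdvd, right_ne_zero_of_mul hkm⟩
  · intro c hc
    obtain ⟨hcm, hm⟩ := Nat.mem_divisors.mp hc
    exact mem_filter.mpr
      ⟨Nat.mem_divisors.mpr ⟨mul_dvd_mul_left k hcm, mul_ne_zero hk.ne' hm⟩, dvd_mul_right k c⟩
  · rintro _ hd
    obtain ⟨-, c, rfl⟩ := mem_filter.mp hd
    simp [Nat.mul_div_cancel_left c hk]
  · intro c _
    simp [Nat.mul_div_cancel_left c hk]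
  · rintro _ hd
    obtain ⟨-, c, rfl⟩ := mem_filter.mp hd
    rw [Nat.mul_div_mul_left m c hk, Nat.mul_div_cancel_left c hk]

theorem sum_divisors_filter_dvd_moebius_div {k : ℕ} (hk : 0 < k) (n : ℕ) :
    ∑ d ∈ n.divisors with k ∣ d, (μ (n / d) : R) = if n = k then 1 else 0 := by
  by_cases hkn : k ∣ n
  · obtain ⟨m, rfl⟩ := hkn
    rw [sum_divisors_mul_filter_dvd_moebius_div hk, sum_divisors_moebius_div]
    simp [hk.ne']
  · rw [if_neg (by rintro rfl; exact hkn dvd_rfl), sum_eq_zero]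
    intro d hd
    obtain ⟨hdn, hkd⟩ := mem_filter.mp hd
    exact absurd (hkd.trans (Nat.dvd_of_mem_divisors hdn)) hkn

theorem sum_divisors_moebius_div_mul_self (n : ℕ) :
    ∑ d ∈ n.divisors, (μ (n / d) : R) * d = n.totient := by
  rcases n.eq_zero_or_pos with rfl | hn
  · simp
  have := (sum_eq_iff_sum_mul_moebius_eq (f := fun n => (n.totient : R)) (g := (↑))).mp
    (fun m _ => by simpa using congrArg (Nat.cast : ℕ → R) (Nat.sum_totient m)) n hn
  rw [← this, Nat.sum_divisorsAntidiagonal' fun x y => (μ x : R) * y]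

end Ring

section Field

variable {K : Type*} [Field K] [CharZero K]

theorem moebius_mul_pow_apply_prime_pow (k : ℕ) {p e : ℕ} (hp : p.Prime) (he : e ≠ 0) :
    ((μ : ArithmeticFunction K) * (pow k : ArithmeticFunction K)) (p ^ e) =
      ((p : K) ^ e) ^ k * (1 - 1 / (p : K) ^ k) := by
  obtain ⟨j, rfl⟩ := Nat.exists_eq_succ_of_ne_zero he
  have hp0 : (p : K) ≠ 0 := Nat.cast_ne_zero.mpr hp.ne_zero
  rw [moebius_mul_apply_eq_sum_divisors, Nat.sum_divisors_prime_pow hp,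
    sum_range_succ, sum_range_succ, sum_eq_zero fun i hi => ?_]
  · simp [natCoe_apply, pow_apply, moebius_apply_prime hp, Nat.pow_div, hp.pos, hp.ne_zero]
    field_simp
    ring
  · rw [Nat.pow_div (by grind) hp.pos, moebius_apply_prime_pow hp (by grind), if_neg (by grind)]
    simp

theorem sum_divisors_moebius_div_mul_pow (k : ℕ) {n : ℕ} (hn : n ≠ 0) :
    ∑ d ∈ n.divisors, (μ (n / d) : K) * (d : K) ^ k =
      (n : K) ^ k * ∏ p ∈ n.primeFactors, (1 - 1 / (p : K) ^ k) := by
  have hmult : ((μ : ArithmeticFunction K) * (pow k : ArithmeticFunction K)).IsMultiplicative :=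
    isMultiplicative_moebius.intCast.mul isMultiplicative_pow.natCast
  calc ∑ d ∈ n.divisors, (μ (n / d) : K) * (d : K) ^ k
      = ((μ : ArithmeticFunction K) * (pow k : ArithmeticFunction K)) n := by
        rw [moebius_mul_apply_eq_sum_divisors]
        refine sum_congr rfl fun d hd => ?_
        simp [natCoe_apply, pow_apply, (Nat.pos_of_mem_divisors hd).ne']
    _ = ∏ p ∈ n.primeFactors, ((p : K) ^ n.factorization p) ^ k * (1 - 1 / (p : K) ^ k) := by
        rw [hmult.multiplicative_factorization _ hn, Nat.prod_factorization_eq_prod_primeFactors]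
        refine prod_congr rfl fun p hp => ?_
        have hp' := Nat.prime_of_mem_primeFactors hp
        exact moebius_mul_pow_apply_prime_pow k hp'
          (hp'.factorization_pos_of_dvd hn (Nat.dvd_of_mem_primeFactors hp)).ne'
    _ = (n : K) ^ k * ∏ p ∈ n.primeFactors, (1 - 1 / (p : K) ^ k) := by
        rw [prod_mul_distrib, prod_pow]
        congr 2
        exact_mod_cast (Nat.prod_primeFactors_pow_factorization hn).symm

end Field

theorem two_mul_F_summand {d : ℕ} (hd : 0 < d) :
    (2 : ℤ) * (((d / 2 : ℕ) : ℤ) + (((d - 1) * (d - 2) / 2 : ℕ) : ℤ)) =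
      ((d : ℤ) - 1) ^ 2 + if 2 ∣ d then 1 else 0 := by
  obtain rfl | hd2 : d = 1 ∨ 2 ≤ d := by omega
  · norm_num
  have hhalf : ((d / 2 : ℕ) : ℤ) * 2 = d - 1 + if 2 ∣ d then 1 else 0 := by
    split_ifs <;> omega
  obtain ⟨q, hq⟩ : 2 ∣ (d - 1) * (d - 2) := by
    simpa [Nat.sub_sub] using (Nat.even_mul_pred_self (d - 1)).two_dvd
  have hchoose : (((d - 1) * (d - 2) / 2 : ℕ) : ℤ) * 2 = ((d : ℤ) - 1) * ((d : ℤ) - 2) := by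
    have hq' := congrArg (Nat.cast : ℕ → ℤ) hq
    push_cast [Nat.cast_sub (by omega : 1 ≤ d), Nat.cast_sub hd2] at hq'
    rw [hq, Nat.mul_div_cancel_left q two_pos, hq']
    ring
  linear_combination hhalf + hchoose

theorem two_mul_F (a : ℕ) :
    2 * (F a : ℚ) = ∑ d ∈ a.divisors, (μ (a / d) : ℚ) * (d : ℚ) ^ 2 - 2 * a.totient +
      (if a = 1 then 1 else 0) + (if a = 2 then 1 else 0) := by
  have hsummand : ∀ d ∈ a.divisors,
      2 * ((μ (a / d) : ℚ) * (((d / 2 : ℕ) : ℚ) + (((d - 1) * (d - 2) / 2 : ℕ) : ℚ))) =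
        μ (a / d) * (d : ℚ) ^ 2 - 2 * (μ (a / d) * d) + μ (a / d) +
          if 2 ∣ d then (μ (a / d) : ℚ) else 0 := fun d hd => by
    have h := congrArg (Int.cast : ℤ → ℚ) (two_mul_F_summand (Nat.pos_of_mem_divisors hd))
    simp only [Int.cast_mul, Int.cast_add, Int.cast_natCast, Int.cast_ofNat, Int.cast_pow,
      Int.cast_sub, Int.cast_one, Int.cast_ite, Int.cast_zero] at h
    rw [mul_left_comm, h]
    split_ifs <;> ring
  rw [F, Int.cast_sum, mul_sum]
  simp only [Int.cast_mul, Int.cast_add, Int.cast_natCast]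
  rw [sum_congr rfl hsummand, sum_add_distrib, sum_add_distrib, sum_sub_distrib,
    ← mul_sum, ← sum_filter, sum_divisors_moebius_div_mul_self, sum_divisors_moebius_div,
    sum_divisors_filter_dvd_moebius_div two_pos]

theorem F_add_totient_eq (a : ℕ) (ha : 3 ≤ a) :
    (F a : ℚ) + (Nat.totient a : ℚ) =
      (a : ℚ) ^ 2 / 2 * ∏ p ∈ a.primeFactors, (1 - 1 / (p : ℚ) ^ 2) := by
  have h := two_mul_F a
  rw [sum_divisors_moebius_div_mul_pow 2 (by omega), if_neg (by omega), if_neg (by omega)] at h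
  linarith
end

section
/- For every integer a ≥ 3, define V on (ℤ/aℤ)³ by V(x,y,z) = (x+y, z−x, x). Then the equivalence relation on E_1(a) generated by the relations α ∼ S(α), α ∼ T(α), and α ∼ V(α) for those α ∈ E_1(a) with V(α) ∈ E_1(a), has exactly one equivalence class; that is, the group generated by S, T and the adjacency move acts transitively on E_1(a). -/
/-- The adjacency move `V(x,y,z) = (x+y, z−x, x)`. -/
def Vm {n : ℕ} (v : ZMod n × ZMod n × ZMod n) : ZMod n × ZMod n × ZMod n :=
  (v.1 + v.2.1, v.2.2 - v.1, v.1)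

/-- Generating relation on `E_1(a)`: `α ∼ S(α)`, `α ∼ T(α)`, and `α ∼ V(α)` whenever
`V(α)` still lies in `E_1(a)` (automatic here since `β` is an element of `E_1(a)`). -/
def triRelV (a : ℕ) (α β : Ek a 1) : Prop :=
  (β : ZMod a × ZMod a × ZMod a) = Sm (α : ZMod a × ZMod a × ZMod a) ∨
  (β : ZMod a × ZMod a × ZMod a) = Tm (α : ZMod a × ZMod a × ZMod a) ∨
  (β : ZMod a × ZMod a × ZMod a) = Vm (α : ZMod a × ZMod a × ZMod a)

/-!
Write the vertex `(x, y, -(x + y))` as the pair `(x, y)`. The composite `V ∘ T ∘ S` sends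
`(x, y)` to `(x, y - x)`, so a vertex can be slid along the line `y + ℤx` as long as the line
stays inside `E_1(a)`. If `x` is a unit, the line through `(x, y)` consists of the points
`(x, c x)`, and sliding brings `(x, y)` to `(x, x)`; a rotation and a second slide then reach
`(1, 1)`. If `x` is not a unit, the line never leaves `E_1(a)`, because `y + kx = 0` would give
`(x) = (x, y) = (1)`; and since `ℤ/aℤ` has stable range one, the line contains a point `(x, u)`
with `u` a unit, which a rotation moves to the first coordinate.
-/

theorem Ideal.span_natCast_gcd {R : Type*} [CommRing R] (m n : ℕ) :
    Ideal.span {((m.gcd n : ℕ) : R)} = Ideal.span {(m : R), (n : R)} := by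
  have := congrArg (Ideal.map (Int.castRingHom R)) (span_gcd (m : ℤ) (n : ℤ))
  simpa [Ideal.map_span, Set.image_pair, ← Int.coe_gcd] using this

namespace ZMod

theorem natCast_ne_zero_of_pos_of_lt {a k : ℕ} (h0 : 0 < k) (hk : k < a) :
    (k : ZMod a) ≠ 0 := by
  rw [Ne, natCast_eq_zero_iff]
  exact Nat.not_dvd_of_pos_of_lt h0 hk

variable {a : ℕ} [NeZero a]

theorem gcd_val_eq_one_iff_span_eq_top (x y z : ZMod a) :
    Nat.gcd (Nat.gcd (Nat.gcd x.val y.val) z.val) a = 1 ↔ Ideal.span {x, y, z} = ⊤ := by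
  rw [← Nat.Coprime, ← isUnit_iff_coprime, ← Ideal.span_singleton_eq_top,
    Ideal.span_natCast_gcd, Ideal.span_insert, Ideal.span_natCast_gcd, Ideal.span_insert,
    Ideal.span_insert]
  simp [sup_assoc, Ideal.span_insert]

/-- `ℤ/aℤ` has stable range one. -/
theorem exists_isUnit_add_mul {x y : ZMod a} (h : IsCoprime x y) :
    ∃ m : ZMod a, IsUnit (y + m * x) := by
  set d := x.val.gcd a
  have hd : d ∣ a := Nat.gcd_dvd_right _ _
  obtain ⟨c, hc⟩ : x ∣ (d : ZMod a) := by
    rw [← Ideal.mem_span_singleton, ← Ideal.span_singleton_le_iff_mem,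
      Ideal.span_natCast_gcd]
    simp
  let φ := castHom hd (ZMod d)
  have hφx : φ x = 0 := by
    rw [← natCast_zmod_val x, map_natCast, natCast_eq_zero_iff]
    exact Nat.gcd_dvd_left _ _
  have hφy : IsUnit (φ y) := isCoprime_zero_left.1 (hφx ▸ h.map φ)
  obtain ⟨u, hu⟩ := unitsMap_surjective hd hφy.unit
  have hφu : φ (u - y) = 0 := by
    rw [map_sub, sub_eq_zero]
    exact congrArg Units.val hu
  obtain ⟨t, ht⟩ : d ∣ (u - y : ZMod a).val := by
    rwa [← natCast_zmod_val (u - y : ZMod a), map_natCast, natCast_eq_zero_iff] at hφu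
  refine ⟨c * t, ?_⟩
  have : (u : ZMod a) = y + c * t * x := by
    rw [← sub_eq_iff_eq_add', ← natCast_zmod_val (u - y : ZMod a), ht, Nat.cast_mul, hc]
    ring
  exact this ▸ u.isUnit

end ZMod

namespace TriangleGraph

section Admissible

variable {R : Type*} [CommRing R]

def Admissible (p : R × R) : Prop :=
  p.1 ≠ 0 ∧ p.2 ≠ 0 ∧ p.1 + p.2 ≠ 0 ∧ IsCoprime p.1 p.2

def rotate (p : R × R) : R × R := (p.2, -(p.1 + p.2))

def toTriple (p : R × R) : R × R × R := (p.1, p.2, -(p.1 + p.2))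

theorem Admissible.neg {p : R × R} (hp : Admissible p) : Admissible (-p) := by
  obtain ⟨hx, hy, hxy, hc⟩ := hp
  refine ⟨neg_ne_zero.2 hx, neg_ne_zero.2 hy, ?_, hc.neg_neg⟩
  show -p.1 + -p.2 ≠ 0
  rwa [← neg_add, neg_ne_zero]

theorem Admissible.rotate {p : R × R} (hp : Admissible p) : Admissible (rotate p) := by
  obtain ⟨hx, hy, hxy, hc⟩ := hp
  refine ⟨hy, neg_ne_zero.2 hxy, ?_, ?_⟩
  · convert neg_ne_zero.2 hx using 1
    show p.2 + -(p.1 + p.2) = -p.1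
    ring
  · show IsCoprime p.2 (-(p.1 + p.2))
    simpa using (hc.symm.add_mul_left_right 1).neg_right

theorem Admissible.add_mul_of_not_isUnit {x y : R} (hp : Admissible (x, y)) (hx : ¬IsUnit x)
    (c : R) : Admissible (x, y + c * x) := by
  obtain ⟨hx0, -, -, hc⟩ := hp
  have hne (e : R) : y + e * x ≠ 0 := fun h ↦ hx <| isCoprime_zero_right.1 <|
    h ▸ hc.add_mul_right_right e
  refine ⟨hx0, hne c, ?_, hc.add_mul_right_right c⟩
  convert hne (c + 1) using 1
  ring

theorem admissible_add_mul_of_isUnit [Nontrivial R] {x c : R} (hx : IsUnit x) (h1 : 1 + c ≠ 0)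
    (h2 : 2 + c ≠ 0) : Admissible (x, x + c * x) := by
  refine ⟨hx.ne_zero, ?_, ?_, (isCoprime_self.2 hx).add_mul_right_right c⟩
  · show x + c * x ≠ 0
    rwa [← one_add_mul, Ne, hx.mul_left_eq_zero]
  · have : x + (x + c * x) = (2 + c) * x := by ring
    rwa [this, Ne, hx.mul_left_eq_zero]

end Admissible

section Linked

variable {a : ℕ}

theorem toTriple_mem_Ek_one_iff [NeZero a] {p : ZMod a × ZMod a} :
    toTriple p ∈ Ek a 1 ↔ Admissible p := by
  have hspan : Ideal.span {p.1, p.2, -(p.1 + p.2)} = Ideal.span {p.1} ⊔ Ideal.span {p.2} := by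
    rw [Ideal.span_insert, Ideal.span_insert, ← sup_assoc, sup_eq_left,
      Ideal.span_singleton_le_iff_mem]
    exact neg_mem (add_mem (Ideal.mem_sup_left (Ideal.mem_span_singleton_self _))
      (Ideal.mem_sup_right (Ideal.mem_span_singleton_self _)))
  simp only [toTriple, Ek, Set.mem_ofPred_eq, ZMod.gcd_val_eq_one_iff_span_eq_top, hspan,
    Ideal.sup_eq_top_iff_isCoprime, neg_ne_zero, add_neg_cancel, true_and, Admissible]

def Linked (a : ℕ) (p q : ZMod a × ZMod a) : Prop :=
  ∃ (hp : toTriple p ∈ Ek a 1) (hq : toTriple q ∈ Ek a 1),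
    Quot.mk (triRelV a) ⟨toTriple p, hp⟩ = Quot.mk (triRelV a) ⟨toTriple q, hq⟩

theorem Linked.symm {p q : ZMod a × ZMod a} (h : Linked a p q) : Linked a q p :=
  let ⟨hp, hq, h⟩ := h
  ⟨hq, hp, h.symm⟩

theorem Linked.trans {p q r : ZMod a × ZMod a} (h : Linked a p q) (h' : Linked a q r) :
    Linked a p r :=
  let ⟨hp, _, h⟩ := h
  let ⟨_, hr, h'⟩ := h'
  ⟨hp, hr, h.trans h'⟩

variable [NeZero a]

theorem Linked.refl {p : ZMod a × ZMod a} (hp : Admissible p) : Linked a p p :=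
  ⟨toTriple_mem_Ek_one_iff.2 hp, toTriple_mem_Ek_one_iff.2 hp, rfl⟩

theorem linked_neg {p : ZMod a × ZMod a} (hp : Admissible p) : Linked a p (-p) :=
  ⟨toTriple_mem_Ek_one_iff.2 hp, toTriple_mem_Ek_one_iff.2 hp.neg, Quot.sound <| .inl <|
    Prod.ext rfl <| Prod.ext rfl <| show -(-p.1 + -p.2) = -(-(p.1 + p.2)) by ring⟩

theorem linked_rotate {p : ZMod a × ZMod a} (hp : Admissible p) : Linked a p (rotate p) :=
  ⟨toTriple_mem_Ek_one_iff.2 hp, toTriple_mem_Ek_one_iff.2 hp.rotate,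
    Quot.sound <| .inr <| .inl <|
      Prod.ext rfl <| Prod.ext rfl <| show -(p.2 + -(p.1 + p.2)) = p.1 by ring⟩

/-- The move `(x, y) ↦ (x, y - x)` is `V ∘ T ∘ S`. -/
theorem linked_sub {x y : ZMod a} (hp : Admissible (x, y)) (hq : Admissible (x, y - x)) :
    Linked a (x, y) (x, y - x) := by
  refine (linked_neg hp).trans <| (linked_rotate hp.neg).trans
    ⟨toTriple_mem_Ek_one_iff.2 hp.neg.rotate, toTriple_mem_Ek_one_iff.2 hq,
      Quot.sound <| .inr <| .inr ?_⟩
  simp only [toTriple, Vm, rotate, Prod.fst_neg, Prod.snd_neg, Prod.mk.injEq]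
  exact ⟨by ring, by ring, by ring⟩

theorem linked_add_mul {x y : ZMod a} (n : ℕ) (h : ∀ k ≤ n, Admissible (x, y + k * x)) :
    Linked a (x, y) (x, y + n * x) := by
  induction n with
  | zero => simpa using Linked.refl (h 0 le_rfl)
  | succ n ih =>
    have e : y + ((n + 1 : ℕ) : ZMod a) * x - x = y + n * x := by push_cast; ring
    refine (ih fun k hk ↦ h k (by omega)).trans (Linked.symm ?_)
    rw [← e]
    exact linked_sub (h (n + 1) le_rfl) (e ▸ h n (by omega))

theorem linked_self_of_isUnit {x y : ZMod a} (hx : IsUnit x) (hp : Admissible (x, y)) :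
    Linked a (x, y) (x, x) := by
  have : Nontrivial (ZMod a) := nontrivial_of_ne x 0 hp.1
  obtain ⟨c, rfl⟩ : ∃ c, y = c * x :=
    ⟨y * ↑hx.unit⁻¹, by rw [mul_assoc, hx.val_inv_mul, mul_one]⟩
  have hc0 : c ≠ 0 := by rintro rfl; exact hp.2.1 (zero_mul x)
  have hc1 : c + 1 ≠ 0 := fun h ↦ hp.2.2.1 (by linear_combination x * h)
  obtain ⟨n, hn⟩ := Nat.exists_eq_add_one.2 (ZMod.val_pos.2 hc0)
  have hna : n + 2 < a := by
    have : c.val + 1 ≠ a := fun h ↦ hc1 <| by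
      rw [← ZMod.natCast_zmod_val c, ← Nat.cast_add_one, h, ZMod.natCast_self]
    have := c.val_lt
    omega
  have hc : c = 1 + n := by rw [← ZMod.natCast_zmod_val c, hn]; push_cast; ring
  have hslide := linked_add_mul (x := x) (y := x) n fun k hk ↦
    admissible_add_mul_of_isUnit hx
      (by exact_mod_cast ZMod.natCast_ne_zero_of_pos_of_lt (k := 1 + k) (by omega) (by omega))
      (by exact_mod_cast ZMod.natCast_ne_zero_of_pos_of_lt (k := 2 + k) (by omega) (by omega))
  convert hslide.symm using 2
  rw [hc]
  ring

theorem Linked.admissible_right {p q : ZMod a × ZMod a} (h : Linked a p q) : Admissible q :=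
  let ⟨_, hq, _⟩ := h
  toTriple_mem_Ek_one_iff.1 hq

theorem linked_one_one_of_isUnit {x y : ZMod a} (hx : IsUnit x) (hp : Admissible (x, y)) :
    Linked a (x, y) (1, 1) := by
  have : Nontrivial (ZMod a) := nontrivial_of_ne x 0 hp.1
  have hdiag := linked_self_of_isUnit hx hp
  refine hdiag.trans ?_
  by_cases hx1 : x = -1
  · subst hx1
    simpa using linked_neg hdiag.admissible_right
  have hx1' : Admissible (x, 1) :=
    ⟨hx.ne_zero, one_ne_zero, fun h ↦ hx1 (eq_neg_of_add_eq_zero_left h), isCoprime_one_right⟩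
  exact (linked_self_of_isUnit hx hx1').symm.trans <| (linked_rotate hx1').trans <|
    linked_self_of_isUnit isUnit_one hx1'.rotate

theorem linked_one_one {p : ZMod a × ZMod a} (hp : Admissible p) : Linked a p (1, 1) := by
  obtain ⟨x, y⟩ := p
  by_cases hx : IsUnit x
  · exact linked_one_one_of_isUnit hx hp
  obtain ⟨m, hm⟩ := ZMod.exists_isUnit_add_mul hp.2.2.2
  have hslide := linked_add_mul m.val fun k _ ↦ hp.add_mul_of_not_isUnit hx k
  rw [ZMod.natCast_zmod_val] at hslide
  have hq := hp.add_mul_of_not_isUnit hx m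
  exact hslide.trans <| (linked_rotate hq).trans <| linked_one_one_of_isUnit hm hq.rotate

end Linked

end TriangleGraph

open TriangleGraph

theorem graph_connected (a : ℕ) (ha : 3 ≤ a) :
    Nat.card (Quot (triRelV a)) = 1 := by
  have : NeZero a := ⟨by omega⟩
  have : Nontrivial (ZMod a) := ZMod.nontrivial_iff.2 (by omega)
  have h2 : (1 + 1 : ZMod a) ≠ 0 := by
    exact_mod_cast ZMod.natCast_ne_zero_of_pos_of_lt (a := a) (k := 2) (by omega) (by omega)
  have h11 : Admissible ((1, 1) : ZMod a × ZMod a) :=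
    ⟨one_ne_zero, one_ne_zero, h2, isCoprime_one_left⟩
  rw [Nat.card_eq_one_iff_exists]
  refine ⟨Quot.mk _ ⟨toTriple (1, 1), toTriple_mem_Ek_one_iff.2 h11⟩, ?_⟩
  rintro ⟨⟨x, y, z⟩, hv⟩
  obtain rfl : z = -(x + y) := eq_neg_of_add_eq_zero_right hv.2.2.2.1
  obtain ⟨_, _, h⟩ := linked_one_one ((toTriple_mem_Ek_one_iff (p := (x, y))).1 hv)
  exact h
end

section
/- Let a ≥ 2 and k ≥ 1 be integers. The group homomorphism ℤ/aℤ → ℤ/(ka)ℤ sending the class of an integer n to the class of k·n induces, applied componentwise, a bijection from E_1(a) onto E_k(ka), and this bijection intertwines the maps S and T on (ℤ/aℤ)³ with the maps S and T on (ℤ/(ka)ℤ)³. -/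
/-- The map `ℤ/aℤ → ℤ/(ka)ℤ` sending the class of `n` to the class of `k·n`. -/
def dil (a k : ℕ) (x : ZMod a) : ZMod (k * a) := ((k * x.val : ℕ) : ZMod (k * a))

/-- The componentwise extension of `dil` to triples. -/
def dil3 (a k : ℕ) (v : ZMod a × ZMod a × ZMod a) :
    ZMod (k * a) × ZMod (k * a) × ZMod (k * a) :=
  (dil a k v.1, dil a k v.2.1, dil a k v.2.2)

variable {a k : ℕ}

theorem dil_natCast (s : ℕ) : dil a k (s : ZMod a) = ((k * s : ℕ) : ZMod (k * a)) := by
  rw [dil, ZMod.val_natCast, ZMod.natCast_eq_natCast_iff]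
  exact (Nat.mod_modEq s a).mul_left' k

theorem dil_val [NeZero a] (hk : 0 < k) (x : ZMod a) : (dil a k x).val = k * x.val := by
  rw [dil, ZMod.val_natCast, Nat.mod_eq_of_lt (Nat.mul_lt_mul_of_pos_left x.val_lt hk)]

theorem dil_injective [NeZero a] (hk : 0 < k) : Function.Injective (dil a k) := by
  intro x y h
  have h' := congrArg ZMod.val h
  rw [dil_val hk, dil_val hk] at h'
  exact ZMod.val_injective a (Nat.eq_of_mul_eq_mul_left hk h')

theorem dil_add [NeZero a] (x y : ZMod a) : dil a k (x + y) = dil a k x + dil a k y := by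
  rw [← ZMod.natCast_zmod_val x, ← ZMod.natCast_zmod_val y, ← Nat.cast_add]
  simp only [dil_natCast]
  push_cast
  ring

theorem dil_zero : dil a k (0 : ZMod a) = 0 := by
  simp [dil]

theorem dil_eq_zero_iff [NeZero a] (hk : 0 < k) {x : ZMod a} : dil a k x = 0 ↔ x = 0 := by
  rw [← dil_zero, (dil_injective hk).eq_iff]

theorem dil_neg [NeZero a] (x : ZMod a) : dil a k (-x) = -dil a k x :=
  eq_neg_of_add_eq_zero_left (by rw [← dil_add, neg_add_cancel, dil_zero])

theorem exists_dil_eq_of_dvd_val [NeZero (k * a)] {w : ZMod (k * a)} (h : k ∣ w.val) :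
    ∃ x : ZMod a, dil a k x = w :=
  ⟨(w.val / k : ℕ), by rw [dil_natCast, Nat.mul_div_cancel' h, ZMod.natCast_val, ZMod.cast_id]⟩

theorem dil3_injective [NeZero a] (hk : 0 < k) : Function.Injective (dil3 a k) :=
  (dil_injective hk).prodMap ((dil_injective hk).prodMap (dil_injective hk))

theorem dil3_mem_Ek_iff [NeZero a] (hk : 0 < k) {v : ZMod a × ZMod a × ZMod a} :
    dil3 a k v ∈ Ek (k * a) k ↔ v ∈ Ek a 1 := by
  obtain ⟨x, y, z⟩ := v
  have hsum : dil a k x + dil a k y + dil a k z = 0 ↔ x + y + z = 0 := by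
    rw [← dil_add, ← dil_add, dil_eq_zero_iff hk]
  have hgcd : (((dil a k x).val.gcd (dil a k y).val).gcd (dil a k z).val).gcd (k * a) =
      k * ((x.val.gcd y.val).gcd z.val).gcd a := by
    simp only [dil_val hk, Nat.gcd_mul_left]
  simp only [dil3, Ek, Set.mem_ofPred_eq, ne_eq, dil_eq_zero_iff hk, hsum, hgcd,
    mul_eq_left₀ hk.ne']

theorem dvd_val_of_mem_Ek {n : ℕ} {w : ZMod n × ZMod n × ZMod n} (hw : w ∈ Ek n k) :
    k ∣ w.1.val ∧ k ∣ w.2.1.val ∧ k ∣ w.2.2.val := by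
  have hk : k ∣ ((w.1.val.gcd w.2.1.val).gcd w.2.2.val).gcd n := hw.2.2.2.2.symm ▸ dvd_rfl
  have hxyz := hk.trans (Nat.gcd_dvd_left _ _)
  have hxy := hxyz.trans (Nat.gcd_dvd_left _ _)
  exact ⟨hxy.trans (Nat.gcd_dvd_left _ _), hxy.trans (Nat.gcd_dvd_right _ _),
    hxyz.trans (Nat.gcd_dvd_right _ _)⟩

theorem dil3_Sm [NeZero a] (v : ZMod a × ZMod a × ZMod a) :
    dil3 a k (Sm v) = Sm (dil3 a k v) := by
  simp only [dil3, Sm, dil_neg]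

theorem dil3_Tm (v : ZMod a × ZMod a × ZMod a) : dil3 a k (Tm v) = Tm (dil3 a k v) := rfl

theorem dilation_bijection (a k : ℕ) (ha : 2 ≤ a) (hk : 1 ≤ k) :
    (∀ x y : ZMod a, dil a k (x + y) = dil a k x + dil a k y) ∧
    Set.BijOn (dil3 a k) (Ek a 1) (Ek (k * a) k) ∧
    (∀ v : ZMod a × ZMod a × ZMod a,
      dil3 a k (Sm v) = Sm (dil3 a k v) ∧ dil3 a k (Tm v) = Tm (dil3 a k v)) := by
  have : NeZero a := ⟨by omega⟩
  have : NeZero (k * a) := ⟨by positivity⟩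
  refine ⟨dil_add, ⟨fun v hv => (dil3_mem_Ek_iff hk).2 hv, (dil3_injective hk).injOn, ?_⟩,
    fun v => ⟨dil3_Sm v, dil3_Tm v⟩⟩
  intro w hw
  obtain ⟨h1, h2, h3⟩ := dvd_val_of_mem_Ek hw
  obtain ⟨x, hx⟩ := exists_dil_eq_of_dvd_val h1
  obtain ⟨y, hy⟩ := exists_dil_eq_of_dvd_val h2
  obtain ⟨z, hz⟩ := exists_dil_eq_of_dvd_val h3
  have hxyz : dil3 a k (x, y, z) = w := by rw [dil3, hx, hy, hz]
  exact ⟨(x, y, z), (dil3_mem_Ek_iff hk).1 (hxyz ▸ hw), hxyz⟩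
end

section
/- For every integer a ≥ 4, 6 divides 5·F(a) + 2·φ(a), where F(a) = Σ_{d ∣ a} μ(a/d)·(⌊d/2⌋ + (d−1)(d−2)/2), μ is the Möbius function, and φ is Euler's totient function. -/
/-!
Since `⌊d/2⌋ + (d-1)(d-2)/2 = (d² - 2d + 2 - [d odd]) / 2`, Möbius inversion gives
`2 F(a) = J₂(a) - 2 φ(a) + 2 [a = 1] - Σ_{d ∣ a, d odd} μ(a/d)`,
where `J₂ = μ * d²` is Jordan's totient. The last sum is a multiplicative function vanishing at
every `a ≥ 3`. Multiplicativity also gives `J₂(a) = ∏ p^(2(k-1)) (p² - 1)` over `p^k ∥ a`, which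
is divisible by `12` once `a ≥ 4`: `p² - 1` is divisible by `8` for odd `p` and by `3` for
`p ≠ 3`, while `a = 2^k` or `3^k` forces `k ≥ 2`. Hence `2 (5 F(a) + 2 φ(a)) = 5 J₂(a) - 6 φ(a)`
is divisible by `12`, `φ(a)` being even.
-/

theorem Int.three_dvd_sq_sub_one {x : ℤ} (hx : ¬ 3 ∣ x) : 3 ∣ x ^ 2 - 1 := by
  rw [show x ^ 2 - 1 = (x - 1) * (x + 1) by ring]
  rcases (by omega : x % 3 = 1 ∨ x % 3 = 2) with h | h
  · exact (Int.dvd_of_emod_eq_zero (by omega)).mul_right _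
  · exact (Int.dvd_of_emod_eq_zero (by omega)).mul_left _

open ArithmeticFunction
open scoped ArithmeticFunction.zeta ArithmeticFunction.Moebius

namespace ArithmeticFunction

theorem nsmul_apply {R : Type*} [AddMonoid R] (k : ℕ) (f : ArithmeticFunction R) (n : ℕ) :
    (k • f) n = k • f n := by
  induction k with
  | zero => simp
  | succ k ih => rw [succ_nsmul, add_apply, ih, succ_nsmul]

theorem mul_apply_eq_sum_divisors {R : Type*} [Semiring R] (f g : ArithmeticFunction R) (n : ℕ) :
    (f * g) n = ∑ d ∈ n.divisors, f (n / d) * g d := by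
  rw [mul_apply, Nat.sum_divisorsAntidiagonal' (fun x y => f x * g y)]

theorem IsMultiplicative.dvd_apply_of_dvd_apply_ordProj {R : Type*} [CommMonoidWithZero R]
    {f : ArithmeticFunction R} (hf : f.IsMultiplicative) {c : R} {n p : ℕ} (hp : p.Prime)
    (h : c ∣ f (ordProj[p] n)) : c ∣ f n := by
  rcases eq_or_ne n 0 with rfl | hn
  · simp
  rw [← Nat.ordProj_mul_ordCompl_eq_self n p,
    hf.map_mul_of_coprime ((Nat.coprime_ordCompl hp hn).pow_left _)]
  exact h.mul_right _

theorem IsMultiplicative.dvd_apply_of_dvd_apply_prime_pow {R : Type*} [CommMonoidWithZero R]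
    {f : ArithmeticFunction R} (hf : f.IsMultiplicative) {c : R} {q n : ℕ}
    (h_ne : ∀ p k, p.Prime → p ≠ q → k ≠ 0 → c ∣ f (p ^ k))
    (h_eq : ∀ k, 2 ≤ k → c ∣ f (q ^ k)) (hn1 : n ≠ 1) (hnq : n ≠ q) : c ∣ f n := by
  rcases eq_or_ne n 0 with rfl | hn0
  · simp
  by_cases hp : ∃ p, p.Prime ∧ p ∣ n ∧ p ≠ q
  · obtain ⟨p, hp, hpn, hpq⟩ := hp
    exact hf.dvd_apply_of_dvd_apply_ordProj hp
      (h_ne p _ hp hpq (hp.factorization_pos_of_dvd hn0 hpn).ne')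
  · have hpow := Nat.eq_prime_pow_of_unique_prime_dvd hn0 fun hp' hd =>
      by_contra fun hne => hp ⟨_, hp', hd, hne⟩
    refine hpow ▸ h_eq _ ?_
    by_contra! hk
    interval_cases n.primeFactorsList.length <;> simp_all

theorem moebius_mul_apply_prime_pow (g : ArithmeticFunction ℤ) {p k : ℕ} (hp : p.Prime)
    (hk : k ≠ 0) : (μ * g) (p ^ k) = g (p ^ k) - g (p ^ (k - 1)) := by
  obtain ⟨k, rfl⟩ := Nat.exists_eq_add_one_of_ne_zero hk
  rw [mul_apply_eq_sum_divisors, Nat.sum_divisors_prime_pow hp, Finset.sum_range_succ,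
    Finset.sum_range_succ, Finset.sum_eq_zero fun i hi => ?_]
  · rw [Nat.pow_div (by omega) hp.pos, Nat.div_self (pow_pos hp.pos _), Nat.add_sub_cancel_left,
      pow_one, moebius_apply_prime hp, moebius_apply_one, Nat.add_sub_cancel]
    ring
  · rw [Finset.mem_range] at hi
    rw [Nat.pow_div (by omega) hp.pos, moebius_apply_prime_pow hp (by omega), if_neg (by omega),
      zero_mul]

theorem moebius_mul_coe_id_apply (n : ℕ) :
    (μ * (↑ArithmeticFunction.id : ArithmeticFunction ℤ)) n = n.totient := by
  rcases n.eq_zero_or_pos with rfl | hn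
  · simp
  have := (sum_eq_iff_sum_mul_moebius_eq (f := fun m => (m.totient : ℤ)) (g := (↑·))).mp
    (fun m _ => by exact_mod_cast Nat.sum_totient m) n hn
  simpa using this

def jordanTotient (k : ℕ) : ArithmeticFunction ℤ := μ * ↑(pow k)

theorem isMultiplicative_jordanTotient (k : ℕ) : (jordanTotient k).IsMultiplicative :=
  isMultiplicative_moebius.mul isMultiplicative_pow.natCast

theorem jordanTotient_apply_prime_pow (k : ℕ) {p n : ℕ} (hp : p.Prime) (hn : n ≠ 0) :
    jordanTotient k (p ^ n) = (p : ℤ) ^ (k * (n - 1)) * ((p : ℤ) ^ k - 1) := by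
  obtain ⟨n, rfl⟩ := Nat.exists_eq_add_one_of_ne_zero hn
  rw [jordanTotient, moebius_mul_apply_prime_pow _ hp hn]
  have hp0 (m : ℕ) : ¬(k = 0 ∧ p ^ m = 0) := fun h => pow_ne_zero m hp.ne_zero h.2
  rw [natCoe_apply, natCoe_apply, pow_apply, pow_apply, if_neg (hp0 _), if_neg (hp0 _),
    Nat.add_sub_cancel]
  push_cast
  ring

theorem four_dvd_jordanTotient_two {n : ℕ} (hn1 : n ≠ 1) (hn2 : n ≠ 2) :
    4 ∣ jordanTotient 2 n := by
  refine (isMultiplicative_jordanTotient 2).dvd_apply_of_dvd_apply_prime_pow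
    (fun p k hp hp2 hk => ?_) (fun k hk => ?_) hn1 hn2
  · rw [jordanTotient_apply_prime_pow 2 hp hk]
    exact Dvd.dvd.mul_left ((by norm_num : (4 : ℤ) ∣ 8).trans
      (Int.eight_dvd_sq_sub_one_of_odd (by exact_mod_cast hp.odd_of_ne_two hp2))) _
  · rw [jordanTotient_apply_prime_pow 2 Nat.prime_two (by omega), pow_mul]
    exact Dvd.dvd.mul_right (dvd_pow (by norm_num) (by omega)) _

theorem three_dvd_jordanTotient_two {n : ℕ} (hn1 : n ≠ 1) (hn3 : n ≠ 3) :
    3 ∣ jordanTotient 2 n := by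
  refine (isMultiplicative_jordanTotient 2).dvd_apply_of_dvd_apply_prime_pow
    (fun p k hp hp3 hk => ?_) (fun k hk => ?_) hn1 hn3
  · rw [jordanTotient_apply_prime_pow 2 hp hk]
    refine Dvd.dvd.mul_left (Int.three_dvd_sq_sub_one ?_) _
    exact_mod_cast (Nat.prime_dvd_prime_iff_eq Nat.prime_three hp).not.mpr (Ne.symm hp3)
  · rw [jordanTotient_apply_prime_pow 2 Nat.prime_three (by omega)]
    exact Dvd.dvd.mul_right (dvd_pow_self _ (by omega)) _

theorem twelve_dvd_jordanTotient_two {n : ℕ} (hn : 3 < n) : 12 ∣ jordanTotient 2 n :=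
  IsCoprime.mul_dvd (by norm_num [Int.isCoprime_iff_gcd_eq_one])
    (three_dvd_jordanTotient_two (n := n) (by omega) (by omega))
    (four_dvd_jordanTotient_two (by omega) (by omega))

def oddIndicator : ArithmeticFunction ℤ := ⟨fun d => ((d % 2 : ℕ) : ℤ), rfl⟩

@[simp]
theorem oddIndicator_apply (d : ℕ) : oddIndicator d = ((d % 2 : ℕ) : ℤ) := rfl

theorem isMultiplicative_oddIndicator : oddIndicator.IsMultiplicative := by
  refine ⟨rfl, fun {m n} _ => ?_⟩
  simp only [oddIndicator_apply]
  norm_cast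
  rcases Nat.mod_two_eq_zero_or_one m with hm | hm <;>
    rcases Nat.mod_two_eq_zero_or_one n with hn | hn <;> simp [Nat.mul_mod, hm, hn]

theorem moebius_mul_oddIndicator_apply_eq_zero {n : ℕ} (hn1 : n ≠ 1) (hn2 : n ≠ 2) :
    (μ * oddIndicator) n = 0 := by
  refine zero_dvd_iff.mp ((isMultiplicative_moebius.mul isMultiplicative_oddIndicator)
    |>.dvd_apply_of_dvd_apply_prime_pow (fun p k hp hp2 hk => ?_) (fun k hk => ?_) hn1 hn2)
  · rw [moebius_mul_apply_prime_pow _ hp hk]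
    simp [Nat.odd_iff.mp (hp.odd_of_ne_two hp2).pow]
  · rw [moebius_mul_apply_prime_pow _ Nat.prime_two (by omega)]
    simp [Nat.pow_mod, show k ≠ 0 by omega, show k - 1 ≠ 0 by omega]

end ArithmeticFunction

def chamberTerm : ArithmeticFunction ℤ :=
  ⟨fun d => ((d / 2 : ℕ) : ℤ) + (((d - 1) * (d - 2) / 2 : ℕ) : ℤ), rfl⟩

theorem chamberTerm_apply (d : ℕ) :
    chamberTerm d = ((d / 2 : ℕ) : ℤ) + (((d - 1) * (d - 2) / 2 : ℕ) : ℤ) := rfl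

theorem F_eq_moebius_mul_chamberTerm (a : ℕ) : F a = (μ * chamberTerm) a := by
  rw [mul_apply_eq_sum_divisors]
  rfl

theorem two_nsmul_chamberTerm_add :
    2 • chamberTerm + 2 • (↑ArithmeticFunction.id : ArithmeticFunction ℤ) + oddIndicator =
      ↑(pow 2) + 2 • (↑ζ : ArithmeticFunction ℤ) := by
  ext d
  simp only [ArithmeticFunction.add_apply, nsmul_apply, natCoe_apply, pow_apply, id_apply,
    zeta_apply, oddIndicator_apply, chamberTerm_apply]
  simp only [nsmul_eq_mul]
  rcases d with _ | _ | e
  · simp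
  · simp
  have hchoose : 2 * ((e + 1) * e / 2) = (e + 1) * e :=
    Nat.two_mul_div_two_of_even (mul_comm e (e + 1) ▸ Nat.even_mul_succ_self e)
  have hhalf := Nat.div_add_mod (e + 2) 2
  have : 2 * ((e + 2) / 2 + (e + 2 - 1) * (e + 2 - 2) / 2) + 2 * (e + 2) + (e + 2) % 2 =
      (e + 2) ^ 2 + 2 := by
    simp only [Nat.add_sub_cancel, show e + 2 - 1 = e + 1 by omega]
    nlinarith
  rw [if_neg (by omega), if_neg (by omega)]
  exact_mod_cast this

theorem two_mul_F_add_two_mul_totient (a : ℕ) :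
    2 * F a + 2 * a.totient + (μ * oddIndicator) a =
      jordanTotient 2 a + 2 * (1 : ArithmeticFunction ℤ) a := by
  have := congrArg (fun f => (μ * f) a) two_nsmul_chamberTerm_add
  simp only [mul_add, mul_smul_comm, ArithmeticFunction.add_apply, nsmul_apply,
    moebius_mul_coe_zeta, ← jordanTotient.eq_1, moebius_mul_coe_id_apply,
    ← F_eq_moebius_mul_chamberTerm] at this
  simpa only [nsmul_eq_mul, Nat.cast_ofNat] using this

theorem six_dvd_chamber_count (a : ℕ) (ha : 4 ≤ a) :
    (6 : ℤ) ∣ 5 * F a + 2 * (Nat.totient a : ℤ) := by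
  have key := two_mul_F_add_two_mul_totient a
  rw [moebius_mul_oddIndicator_apply_eq_zero (by omega) (by omega), one_apply_ne (by omega)] at key
  obtain ⟨j, hj⟩ := twelve_dvd_jordanTotient_two ha
  obtain ⟨t, ht⟩ := (Nat.totient_even (by omega : 2 < a)).two_dvd
  exact ⟨5 * j - t, by omega⟩
end
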